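/- arXiv:1103.4565 — 2 statements merged into one kernel-verified Lean document; each statement's English description precedes it below -/
import Mathlib

section
/- An abelian group G has only finitely many finite-index subgroups if and only if G/G¹ is finite, where G¹ is the first Ulm subgroup. -/
/-- The subgroup mG = {m•x : x ∈ G} of an abelian group G. -/
def nsmulRange (G : Type*) [AddCommGroup G] (m : ℕ) : AddSubgroup G :=
  (m • AddMonoidHom.id G).range

/-- The first Ulm subgroup G¹ = ⋂_{m ≥ 1} mG. -/
def ulm (G : Type*) [AddCommGroup G] : AddSubgroup G :=
  ⨅ m ∈ Set.Ioi (0 : ℕ), nsmulRange G m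

/-!
Every finite-index subgroup `N` contains `N.index • G`, hence `G¹`. Conversely, `G ⧸ mG` has
bounded exponent, so its characters into `ℚ/ℤ`, which separate points, have finite image: it is
residually finite. Thus `G¹` is the intersection of all finite-index subgroups. If there are
finitely many of them, this intersection has finite index; if `G ⧸ G¹` is finite, the
finite-index subgroups embed into the finitely many subgroups of `G ⧸ G¹`.
-/

theorem AddCommGroup.residuallyFinite_of_exponentExists {A : Type*} [AddCommGroup A]
    (hA : AddMonoid.ExponentExists A) : AddGroup.ResiduallyFinite A := by
  obtain ⟨n, hn, hnA⟩ := hA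
  rw [AddGroup.residuallyFinite_iff_exists_finiteIndex]
  intro a ha
  obtain ⟨c, hc⟩ : ∃ c : A →+ AddCircle (1 : ℚ), c a ≠ 0 :=
    CharacterModule.exists_character_apply_ne_zero_of_ne_zero ha
  have : Finite c.range := by
    refine ((AddCircle.finite_torsion (1 : ℚ) hn).subset ?_).to_subtype
    rintro _ ⟨x, rfl⟩
    rw [Set.mem_ofPred_eq, ← map_nsmul, hnA, map_zero]
  exact ⟨c.ker, AddSubgroup.finiteIndex_ker c, hc⟩

section Ulm

variable {G : Type*} [AddCommGroup G]

theorem mem_nsmulRange_iff {m : ℕ} {x : G} : x ∈ nsmulRange G m ↔ ∃ y, m • y = x :=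
  AddMonoidHom.mem_range

theorem exponentExists_quotient_nsmulRange {m : ℕ} (hm : 0 < m) :
    AddMonoid.ExponentExists (G ⧸ nsmulRange G m) :=
  ⟨m, hm, fun y => QuotientAddGroup.induction_on y fun x =>
    (QuotientAddGroup.eq_zero_iff _).2 (mem_nsmulRange_iff.2 ⟨x, rfl⟩)⟩

theorem mem_ulm_iff {x : G} : x ∈ ulm G ↔ ∀ m, 0 < m → x ∈ nsmulRange G m := by
  simp [ulm, AddSubgroup.mem_iInf]

theorem ulm_le_of_finiteIndex (N : AddSubgroup G) [N.FiniteIndex] : ulm G ≤ N := by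
  intro x hx
  have hN : 0 < N.index := Nat.pos_of_ne_zero AddSubgroup.FiniteIndex.index_ne_zero
  obtain ⟨y, rfl⟩ := mem_nsmulRange_iff.1 (mem_ulm_iff.1 hx N.index hN)
  exact N.nsmul_index_mem y

theorem mem_nsmulRange_of_forall_finiteIndex {m : ℕ} (hm : 0 < m) {x : G}
    (hx : ∀ N : AddSubgroup G, N.FiniteIndex → x ∈ N) : x ∈ nsmulRange G m := by
  have := AddCommGroup.residuallyFinite_of_exponentExists
    (exponentExists_quotient_nsmulRange (G := G) hm)
  rw [← QuotientAddGroup.eq_zero_iff]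
  refine AddGroup.residuallyFinite_iff_forall_finiteIndex.1 this _ fun N hN =>
    hx (N.comap (QuotientAddGroup.mk' (nsmulRange G m))) ⟨?_⟩
  rw [AddSubgroup.index_comap_of_surjective _ (QuotientAddGroup.mk'_surjective _)]
  exact hN.index_ne_zero

theorem ulm_isGLB_finiteIndex : IsGLB {N : AddSubgroup G | N.FiniteIndex} (ulm G) :=
  ⟨fun N (_ : N.FiniteIndex) => ulm_le_of_finiteIndex N, fun _ hH _ hx =>
    mem_ulm_iff.2 fun _ hm => mem_nsmulRange_of_forall_finiteIndex hm fun _ hN => hH hN hx⟩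

end Ulm

/-- G has only finitely many finite-index subgroups iff G/G¹ is finite. -/
theorem finitely_many_finiteIndex_iff (G : Type*) [AddCommGroup G] :
    {N : AddSubgroup G | N.FiniteIndex}.Finite ↔ Finite (G ⧸ ulm G) := by
  constructor
  · intro hS
    have := hS.to_subtype
    suffices (ulm G).FiniteIndex by infer_instance
    rw [← ulm_isGLB_finiteIndex.sInf_eq, sInf_eq_iInf']
    exact AddSubgroup.finiteIndex_iInf fun N => N.2
  · intro _
    have : Finite {N : AddSubgroup G | ulm G ≤ N} :=
      .of_equiv _ (QuotientAddGroup.comapMk'OrderIso (ulm G)).toEquiv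
    exact (Set.toFinite {N | ulm G ≤ N}).subset fun N hN => ulm_isGLB_finiteIndex.1 hN
end

section
/- Let G be an abelian group such that no proper quotient of G is divisible (G is strongly non-divisible). Then every quotient of G is residually finite; in particular G¹ = 0. -/
/-!
If `x ≠ 0` and `K` is a subgroup maximal among those avoiding `x`, then `C = G ⧸ K` is cocyclic:
the image `c` of `x` lies in every nonzero cyclic subgroup. Such a `C` is a `p`-group with
`p` the (prime) order of `c`, and its `p`-torsion is `⟨c⟩`. If `C` is not divisible then
`p • C ≠ C`; for `y ∉ p • C`, induction on `e` shows that everything killed by `p ^ e` is a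
multiple of `y`, so `C = ⟨y⟩` is finite and `K` is a finite-index subgroup avoiding `x`.
Strong non-divisibility passes to quotients, and `G¹` lies in every finite-index subgroup.
-/

open AddSubgroup

def IsDivisible (A : Type*) [AddCommGroup A] : Prop :=
  ∀ m : ℕ, 0 < m → nsmulRange A m = ⊤

def StronglyNonDivisible (G : Type*) [AddCommGroup G] : Prop :=
  ∀ H : AddSubgroup G, H ≠ ⊤ → ¬ IsDivisible (G ⧸ H)

lemma mem_nsmulRange {A : Type*} [AddCommGroup A] {m : ℕ} {y : A} :
    y ∈ nsmulRange A m ↔ ∃ x : A, m • x = y := by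
  simp [nsmulRange, AddMonoidHom.mem_range]

lemma ulm_le_of_finiteIndex_s17 {A : Type*} [AddCommGroup A] (K : AddSubgroup A) [K.FiniteIndex] :
    ulm A ≤ K := by
  intro x hx
  simp only [ulm, mem_iInf, Set.mem_Ioi] at hx
  obtain ⟨w, rfl⟩ := mem_nsmulRange.1 (hx K.index (Nat.pos_of_ne_zero FiniteIndex.index_ne_zero))
  exact K.nsmul_index_mem w

lemma IsDivisible.of_surjective {A B : Type*} [AddCommGroup A] [AddCommGroup B] {f : A →+ B}
    (hf : Function.Surjective f) (hA : IsDivisible A) : IsDivisible B := by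
  refine fun m hm => (eq_top_iff' _).2 fun b => ?_
  obtain ⟨a, rfl⟩ := hf b
  obtain ⟨x, rfl⟩ := mem_nsmulRange.1 (hA m hm ▸ mem_top a)
  exact mem_nsmulRange.2 ⟨f x, (map_nsmul f m x).symm⟩

lemma exists_prime_nsmulRange_ne_top {A : Type*} [AddCommGroup A] (hA : ¬ IsDivisible A) :
    ∃ q : ℕ, q.Prime ∧ nsmulRange A q ≠ ⊤ := by
  by_contra! hprime
  refine hA fun m hm => ?_
  induction m using Nat.recOnMul with
  | zero => exact absurd hm (lt_irrefl 0)
  | one => exact (eq_top_iff' _).2 fun z => mem_nsmulRange.2 ⟨z, one_smul ℕ z⟩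
  | prime q hq => exact hprime q hq
  | mul a b iha ihb =>
    refine (eq_top_iff' _).2 fun z => ?_
    obtain ⟨w, rfl⟩ := mem_nsmulRange.1 (iha (Nat.pos_of_mul_pos_right hm) ▸ mem_top z)
    obtain ⟨v, rfl⟩ := mem_nsmulRange.1 (ihb (Nat.pos_of_mul_pos_left hm) ▸ mem_top w)
    exact mem_nsmulRange.2 ⟨v, mul_smul a b v⟩

lemma StronglyNonDivisible.of_surjective {G Q : Type*} [AddCommGroup G] [AddCommGroup Q]
    (hG : StronglyNonDivisible G) {f : G →+ Q} (hf : Function.Surjective f) :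
    StronglyNonDivisible Q := by
  intro K hK hdiv
  let g := (QuotientAddGroup.mk' K).comp f
  let e := QuotientAddGroup.quotientKerEquivOfSurjective g
    ((QuotientAddGroup.mk'_surjective K).comp hf)
  have : Nontrivial (Q ⧸ K) := QuotientAddGroup.nontrivial_iff.2 hK
  have : Nontrivial (G ⧸ g.ker) := e.toEquiv.nontrivial
  exact hG g.ker (QuotientAddGroup.nontrivial_iff.1 this)
    (hdiv.of_surjective (f := e.symm.toAddMonoidHom) e.symm.surjective)

lemma AddSubgroup.mem_of_zsmul_mem_of_isCoprime {A : Type*} [AddCommGroup A] {S : AddSubgroup A}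
    {y : A} {j n : ℤ} (h : IsCoprime j n) (hj : j • y ∈ S) (hn : n • y ∈ S) : y ∈ S := by
  obtain ⟨a, b, hab⟩ := h
  have hy : y = a • j • y + b • n • y := by rw [smul_smul, smul_smul, ← add_smul, hab, one_smul]
  exact hy ▸ add_mem (zsmul_mem hj a) (zsmul_mem hn b)

lemma AddSubgroup.exists_maximal_notMem {A : Type*} [AddGroup A] {x : A} (hx : x ≠ 0) :
    ∃ K : AddSubgroup A, Maximal (fun K : AddSubgroup A => x ∉ K) K := by
  obtain ⟨K, -, hK⟩ := zorn_le_nonempty₀ {K : AddSubgroup A | x ∉ K}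
    (fun cc hcs hchain K hK => ⟨sSup cc, fun hx => by
      obtain ⟨L, hL, hxL⟩ := (mem_sSup_of_directedOn ⟨K, hK⟩ hchain.directedOn).1 hx
      exact hcs hL hxL, fun _ => le_sSup⟩) ⊥ (by simpa using hx)
  exact ⟨K, hK⟩

/-- `C` is cocyclic, with `c` generating its socle. -/
structure IsCocyclicWith {C : Type*} [AddCommGroup C] (c : C) : Prop where
  ne_zero : c ≠ 0
  mem_zmultiples : ∀ {a : C}, a ≠ 0 → c ∈ zmultiples a

lemma AddSubgroup.isCocyclicWith_mk_of_maximal {A : Type*} [AddCommGroup A] {x : A}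
    {K : AddSubgroup A} (hK : Maximal (fun K : AddSubgroup A => x ∉ K) K) :
    IsCocyclicWith (x : A ⧸ K) := by
  refine ⟨fun h => hK.prop ((QuotientAddGroup.eq_zero_iff x).1 h), fun {a} ha => ?_⟩
  obtain ⟨g, rfl⟩ := QuotientAddGroup.mk_surjective a
  have hx : x ∈ K ⊔ zmultiples g := by
    by_contra hx
    exact ha ((QuotientAddGroup.eq_zero_iff g).2 (hK.2 hx le_sup_left (mem_sup_right (mem_zmultiples g))))
  obtain ⟨k, hk, _, ⟨n, rfl⟩, rfl⟩ := mem_sup.1 hx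
  refine mem_zmultiples_iff.2 ⟨n, ?_⟩
  simp [(QuotientAddGroup.eq_zero_iff k).2 hk]

namespace IsCocyclicWith

variable {C : Type*} [AddCommGroup C] {c : C}

lemma isOfFinAddOrder_self (hc : IsCocyclicWith c) : IsOfFinAddOrder c := by
  by_cases h2 : (2 : ℤ) • c = 0
  · exact isOfFinAddOrder_iff_zsmul_eq_zero.2 ⟨2, two_ne_zero, h2⟩
  obtain ⟨k, hk⟩ := mem_zmultiples_iff.1 (hc.mem_zmultiples h2)
  refine isOfFinAddOrder_iff_zsmul_eq_zero.2 ⟨k * 2 - 1, by omega, ?_⟩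
  rw [sub_smul, mul_smul, hk, one_smul, sub_self]

lemma isOfFinAddOrder (hc : IsCocyclicWith c) (a : C) : IsOfFinAddOrder a := by
  rcases eq_or_ne a 0 with rfl | ha
  · exact isOfFinAddOrder_iff_nsmul_eq_zero.2 ⟨1, one_pos, smul_zero 1⟩
  obtain ⟨k, hk⟩ := mem_zmultiples_iff.1 (hc.mem_zmultiples ha)
  have hk0 : k ≠ 0 := by rintro rfl; exact hc.ne_zero (by rw [← hk, zero_smul])
  obtain ⟨n, hn, hnc⟩ := isOfFinAddOrder_iff_zsmul_eq_zero.1 hc.isOfFinAddOrder_self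
  exact isOfFinAddOrder_iff_zsmul_eq_zero.2 ⟨n * k, mul_ne_zero hn hk0, by rw [mul_smul, hk, hnc]⟩

lemma addOrderOf_eq_of_prime_dvd (hc : IsCocyclicWith c) {a : C} {q : ℕ} (hq : q.Prime)
    (hqa : q ∣ addOrderOf a) : addOrderOf c = q := by
  set b := (addOrderOf a / q) • a
  have hb : addOrderOf b = q :=
    addOrderOf_nsmul_addOrderOf_sub (hc.isOfFinAddOrder a).addOrderOf_pos.ne' hqa
  have hb0 : b ≠ 0 := fun h => hq.one_lt.ne' (by rw [← hb, h, addOrderOf_zero])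
  exact (hq.eq_one_or_self_of_dvd _ (hb ▸ addOrderOf_dvd_of_mem_zmultiples
    (hc.mem_zmultiples hb0))).resolve_left (by simpa using hc.ne_zero)

lemma addOrderOf_prime (hc : IsCocyclicWith c) : (addOrderOf c).Prime := by
  have h1 : addOrderOf c ≠ 1 := by simpa using hc.ne_zero
  exact hc.addOrderOf_eq_of_prime_dvd (Nat.minFac_prime h1) (Nat.minFac_dvd _) ▸
    Nat.minFac_prime h1

lemma exists_pow_nsmul_eq_zero (hc : IsCocyclicWith c) (a : C) :
    ∃ e : ℕ, addOrderOf c ^ e • a = 0 := by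
  have h := Nat.eq_prime_pow_of_unique_prime_dvd (hc.isOfFinAddOrder a).addOrderOf_pos.ne'
    fun hq hqa => (hc.addOrderOf_eq_of_prime_dvd hq hqa).symm
  exact ⟨_, h ▸ addOrderOf_nsmul_eq_zero a⟩

lemma nsmulRange_eq_top_of_prime_ne (hc : IsCocyclicWith c) {q : ℕ} (hq : q.Prime)
    (hqc : q ≠ addOrderOf c) : nsmulRange C q = ⊤ := by
  refine (eq_top_iff' _).2 fun z => ?_
  have hcop : IsCoprime (q : ℤ) (addOrderOf z) := Nat.Coprime.isCoprime <|
    (hq.coprime_iff_not_dvd).2 fun hqz => hqc (hc.addOrderOf_eq_of_prime_dvd hq hqz).symm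
  refine mem_of_zsmul_mem_of_isCoprime hcop ?_ ?_
  · exact mem_nsmulRange.2 ⟨z, (natCast_zsmul z q).symm⟩
  · rw [natCast_zsmul, addOrderOf_nsmul_eq_zero]
    exact zero_mem _

lemma mem_zmultiples_of_nsmul_eq_zero (hc : IsCocyclicWith c) {w : C}
    (hw : addOrderOf c • w = 0) : w ∈ zmultiples c := by
  rcases eq_or_ne w 0 with rfl | hw0
  · exact zero_mem _
  obtain ⟨k, hk⟩ := mem_zmultiples_iff.1 (hc.mem_zmultiples hw0)
  have hcop : IsCoprime k (addOrderOf c) := by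
    refine ((Prime.coprime_iff_not_dvd (Nat.prime_iff_prime_int.1 hc.addOrderOf_prime)).2 ?_).symm
    rintro ⟨k', rfl⟩
    exact hc.ne_zero (by rw [← hk, mul_comm, mul_smul, natCast_zsmul, hw, smul_zero])
  refine mem_of_zsmul_mem_of_isCoprime hcop (hk ▸ AddSubgroup.mem_zmultiples c) ?_
  rw [natCast_zsmul, hw]
  exact zero_mem _

lemma mem_zmultiples_of_nsmul_mem (hc : IsCocyclicWith c) {y z : C}
    (hy : y ∉ nsmulRange C (addOrderOf c)) (hz : addOrderOf c • z ∈ zmultiples y) :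
    z ∈ zmultiples y := by
  set p := addOrderOf c
  obtain ⟨j, hj⟩ := mem_zmultiples_iff.1 hz
  by_cases hpj : (p : ℤ) ∣ j
  · obtain ⟨j', rfl⟩ := hpj
    have hy0 : y ≠ 0 := fun h => hy (h ▸ zero_mem _)
    have hker : p • (z - j' • y) = 0 := by
      rw [smul_sub, ← hj, mul_smul, natCast_zsmul, sub_self]
    have hzy : z - j' • y ∈ zmultiples y :=
      zmultiples_le_of_mem (hc.mem_zmultiples hy0) (hc.mem_zmultiples_of_nsmul_eq_zero hker)
    simpa using add_mem hzy (zsmul_mem (AddSubgroup.mem_zmultiples y) j')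
  · -- `j` is a unit mod `p`, so `j • y = p • z` would put `y` itself in `p • C`
    refine absurd (mem_of_zsmul_mem_of_isCoprime (j := j) (n := p) ?_ ?_ ?_) hy
    · exact ((Prime.coprime_iff_not_dvd (Nat.prime_iff_prime_int.1 hc.addOrderOf_prime)).2 hpj).symm
    · exact hj ▸ mem_nsmulRange.2 ⟨z, rfl⟩
    · exact mem_nsmulRange.2 ⟨y, (natCast_zsmul y p).symm⟩

lemma zmultiples_eq_top (hc : IsCocyclicWith c) {y : C} (hy : y ∉ nsmulRange C (addOrderOf c)) :
    zmultiples y = ⊤ := by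
  refine (eq_top_iff' _).2 fun z => ?_
  obtain ⟨e, he⟩ := hc.exists_pow_nsmul_eq_zero z
  induction e generalizing z with
  | zero => exact (by simpa using he : z = 0) ▸ zero_mem _
  | succ e ih => exact hc.mem_zmultiples_of_nsmul_mem hy (ih _ (by rwa [smul_smul, ← pow_succ]))

lemma finite_of_not_isDivisible (hc : IsCocyclicWith c) (hC : ¬ IsDivisible C) : Finite C := by
  obtain ⟨q, hq, hqC⟩ := exists_prime_nsmulRange_ne_top hC
  have hqc : q = addOrderOf c := by
    by_contra hqc
    exact hqC (hc.nsmulRange_eq_top_of_prime_ne hq hqc)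
  obtain ⟨y, hy⟩ : ∃ y, y ∉ nsmulRange C q := by
    by_contra! h
    exact hqC ((eq_top_iff' _).2 h)
  rw [← Set.finite_univ_iff, ← coe_top, ← hc.zmultiples_eq_top (hqc ▸ hy)]
  exact (hc.isOfFinAddOrder y).finite_zmultiples

end IsCocyclicWith

lemma StronglyNonDivisible.exists_finiteIndex_notMem {G : Type*} [AddCommGroup G]
    (hG : StronglyNonDivisible G) {x : G} (hx : x ≠ 0) :
    ∃ K : AddSubgroup G, K.FiniteIndex ∧ x ∉ K := by
  obtain ⟨K, hK⟩ := exists_maximal_notMem hx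
  have hKtop : K ≠ ⊤ := fun h => hK.prop (h ▸ mem_top x)
  have : Finite (G ⧸ K) := (isCocyclicWith_mk_of_maximal hK).finite_of_not_isDivisible (hG K hKtop)
  exact ⟨K, finiteIndex_of_finite_quotient, hK.prop⟩

/-- If no proper quotient of G is divisible, then every quotient of G is residually finite;
in particular G¹ = 0. -/
theorem quotients_residually_finite_of_strongly_nondivisible (G : Type*) [AddCommGroup G]
    (h : ∀ H : AddSubgroup G, H ≠ ⊤ → ¬ (∀ m : ℕ, 0 < m → nsmulRange (G ⧸ H) m = ⊤)) :
    (∀ H : AddSubgroup G,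
      (⨅ N ∈ {N : AddSubgroup (G ⧸ H) | N.FiniteIndex}, N) = ⊥) ∧ ulm G = ⊥ := by
  have hG : StronglyNonDivisible G := h
  refine ⟨fun H => eq_bot_iff.2 fun x hx => ?_, eq_bot_iff.2 fun x hx => ?_⟩
  · by_contra hx0
    obtain ⟨K, hK, hxK⟩ :=
      (hG.of_surjective (QuotientAddGroup.mk'_surjective H)).exists_finiteIndex_notMem hx0
    exact hxK (mem_iInf.1 (mem_iInf.1 hx K) hK)
  · by_contra hx0
    obtain ⟨K, hK, hxK⟩ := hG.exists_finiteIndex_notMem hx0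
    exact hxK (ulm_le_of_finiteIndex_s17 K hx)
end
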